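/- arXiv:2110.14242 — 2 statements merged into one kernel-verified Lean document; each statement's English description precedes it below -/
import Mathlib

section
/- Suppose L = C (the k-center setting). Suppose S ⊆ C is nonempty, Z ⊆ C satisfies |Z| ≤ m, and cost(S, C \ Z) ≤ OPT. Then for every subset C' ⊆ C with |C'| ≥ |C| − m and every partition O = (O_1, …, O_k) of C' into k (possibly empty) parts, there exists a subset S' ⊆ S ∪ Z with |S'| ≤ k and S' nonempty such that Ψ(S', O) ≤ 2^z · Ψ*(O). -/
open Finset

noncomputable section

/-- Minimum of `f` over a finite set (`sInf` of the image; `0` on the empty set). -/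
def minOver {X : Type*} (s : Finset X) (f : X → ℝ) : ℝ := sInf (f '' ↑s)

/-- Maximum of `f` over a finite set (`sSup` of the image; `0` on the empty set). -/
def maxOver {X : Type*} (s : Finset X) (f : X → ℝ) : ℝ := sSup (f '' ↑s)

/-- `cost(F, C') = max_{x ∈ C'} min_{f ∈ F} d(f, x)^z`. -/
def ksCost {X : Type*} [MetricSpace X] (z : ℝ) (F C' : Finset X) : ℝ :=
  maxOver C' fun x => minOver F fun f => dist f x ^ z

/-- `Ψ(F, O) = max_{1 ≤ i ≤ k} min_{f ∈ F} max_{x ∈ O_i} d(x, f)^z`. -/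
def Psi {X : Type*} [MetricSpace X] (z : ℝ) {k : ℕ} (F : Finset X)
    (O : Fin k → Finset X) : ℝ :=
  ⨆ i : Fin k, minOver F fun f => maxOver (O i) fun x => dist x f ^ z

/-- `Ψ*(O) = min_{F ⊆ L, |F| = k} Ψ(F, O)`. -/
def PsiStar {X : Type*} [MetricSpace X] (z : ℝ) (L : Finset X) {k : ℕ}
    (O : Fin k → Finset X) : ℝ :=
  sInf ((fun F => Psi z F O) '' {F : Finset X | F ⊆ L ∧ F.card = k})

/-- `OPT = min_{F ⊆ L, |F| = k, Z ⊆ C, |Z| ≤ m} cost(F, C \ Z)`. -/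
def OPTCost {X : Type*} [MetricSpace X] [DecidableEq X] (z : ℝ) (k m : ℕ)
    (L C : Finset X) : ℝ :=
  sInf ((fun p : Finset X × Finset X => ksCost z p.1 (C \ p.2)) ''
    {p : Finset X × Finset X | p.1 ⊆ L ∧ p.1.card = k ∧ p.2 ⊆ C ∧ p.2.card ≤ m})

section Helpers

variable {X : Type*}

lemma image_finite' (s : Finset X) (f : X → ℝ) : (f '' ↑s).Finite :=
  s.finite_toSet.image f

lemma minOver_le (s : Finset X) (f : X → ℝ) {x : X} (hx : x ∈ s) : minOver s f ≤ f x :=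
  csInf_le (image_finite' s f).bddBelow ⟨x, hx, rfl⟩

lemma exists_minOver {s : Finset X} (hs : s.Nonempty) (f : X → ℝ) :
    ∃ x ∈ s, minOver s f = f x := by
  obtain ⟨y, hy⟩ := hs
  obtain ⟨x, hx, hfx⟩ := Set.Nonempty.csInf_mem (s := f '' ↑s)
    ⟨f y, y, hy, rfl⟩ (image_finite' s f)
  exact ⟨x, hx, hfx.symm⟩

lemma le_maxOver (s : Finset X) (f : X → ℝ) {x : X} (hx : x ∈ s) : f x ≤ maxOver s f :=
  le_csSup (image_finite' s f).bddAbove ⟨x, hx, rfl⟩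

lemma maxOver_le {s : Finset X} {f : X → ℝ} {c : ℝ} (hc : 0 ≤ c)
    (h : ∀ x ∈ s, f x ≤ c) : maxOver s f ≤ c := by
  rcases s.eq_empty_or_nonempty with rfl | ⟨x, hx⟩
  · simpa [maxOver, Real.sSup_empty] using hc
  · refine csSup_le ⟨f x, x, hx, rfl⟩ ?_
    rintro y ⟨w, hw, rfl⟩
    exact h w hw

lemma maxOver_nonneg {s : Finset X} {f : X → ℝ} (h : ∀ x ∈ s, 0 ≤ f x) :
    0 ≤ maxOver s f := by
  rcases s.eq_empty_or_nonempty with rfl | ⟨x, hx⟩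
  · simp [maxOver, Real.sSup_empty]
  · exact (h x hx).trans (le_maxOver _ _ hx)

lemma minOver_nonneg {s : Finset X} {f : X → ℝ} (h : ∀ x ∈ s, 0 ≤ f x) :
    0 ≤ minOver s f := by
  rcases s.eq_empty_or_nonempty with rfl | hs
  · simp [minOver, Real.sInf_empty]
  · obtain ⟨x, hx, he⟩ := exists_minOver hs f
    rw [he]; exact h x hx

lemma Psi_nonneg [MetricSpace X] (z : ℝ) {k : ℕ} (F : Finset X) (O : Fin k → Finset X) :
    0 ≤ Psi z F O :=
  Real.iSup_nonneg fun _ => minOver_nonneg fun _ _ =>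
    maxOver_nonneg fun _ _ => Real.rpow_nonneg dist_nonneg z

lemma sum_rpow_le_aux {a b M z : ℝ} (hz : 0 < z) (ha : 0 ≤ a) (hb : 0 ≤ b)
    (haM : a ^ z ≤ M) (hbM : b ^ z ≤ M) : (a + b) ^ z ≤ 2 ^ z * M := by
  have h1 : a + b ≤ 2 * max a b := by
    rcases le_total a b with h | h
    · rw [max_eq_right h]; linarith
    · rw [max_eq_left h]; linarith
  have hmax : 0 ≤ max a b := le_max_of_le_left ha
  have h2 : (a + b) ^ z ≤ (2 * max a b) ^ z :=
    Real.rpow_le_rpow (by linarith) h1 hz.le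
  have h3 : (2 * max a b) ^ z = 2 ^ z * (max a b) ^ z :=
    Real.mul_rpow (by norm_num) hmax
  have h4 : (max a b) ^ z ≤ M := by
    rcases le_total a b with h | h
    · rwa [max_eq_right h]
    · rwa [max_eq_left h]
  calc (a + b) ^ z ≤ 2 ^ z * (max a b) ^ z := by rw [← h3]; exact h2
    _ ≤ 2 ^ z * M :=
        mul_le_mul_of_nonneg_left h4 (Real.rpow_nonneg (by norm_num) z)

end Helpers

theorem list_outlier_k_center_conversion {X : Type*} [MetricSpace X] [DecidableEq X]
    (k m : ℕ) (hk : 1 ≤ k) (z : ℝ) (hz : 0 < z)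
    (C L : Finset X) (hC : C.Nonempty) (hL : k ≤ L.card) (hLC : L = C)
    (S : Finset X) (hSC : S ⊆ C) (hS : S.Nonempty)
    (Z : Finset X) (hZC : Z ⊆ C) (hZm : Z.card ≤ m)
    (hcost : ksCost z S (C \ Z) ≤ OPTCost z k m L C)
    (C' : Finset X) (hC'sub : C' ⊆ C) (hC'card : C.card - m ≤ C'.card)
    (O : Fin k → Finset X)
    (hdisj : ∀ i j, i ≠ j → Disjoint (O i) (O j))
    (hcover : Finset.univ.biUnion O = C') :
    ∃ S' : Finset X, S' ⊆ S ∪ Z ∧ S'.card ≤ k ∧ S'.Nonempty ∧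
      Psi z S' O ≤ (2 : ℝ) ^ z * PsiStar z L O := by
  haveI : Nonempty (Fin k) := ⟨⟨0, hk⟩⟩
  -- F* attaining PsiStar
  have hFsetfin : {F : Finset X | F ⊆ L ∧ F.card = k}.Finite := by
    refine Set.Finite.subset L.powerset.finite_toSet ?_
    intro F hF
    simpa [Finset.mem_powerset] using hF.1
  have hFsetne : {F : Finset X | F ⊆ L ∧ F.card = k}.Nonempty := by
    obtain ⟨F, hF1, hF2⟩ := Finset.exists_subset_card_eq hL
    exact ⟨F, hF1, hF2⟩
  obtain ⟨Fs, hFs, hFsPsi⟩ := Set.Nonempty.csInf_mem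
    (hFsetne.image (fun F => Psi z F O)) (hFsetfin.image _)
  have hFsne : Fs.Nonempty := by
    rw [← Finset.card_pos, hFs.2]; exact hk
  have hPsiStar_eq : PsiStar z L O = Psi z Fs O := hFsPsi.symm
  have hPsiStar_nonneg : 0 ≤ PsiStar z L O := hPsiStar_eq ▸ Psi_nonneg z Fs O
  have hbddrange : ∀ (F : Finset X), BddAbove (Set.range fun i : Fin k =>
      minOver F fun f => maxOver (O i) fun x => dist x f ^ z) := fun F =>
    (Set.finite_range _).bddAbove
  -- OPT ≤ PsiStar
  have hcost_le_Psi : ksCost z Fs C' ≤ Psi z Fs O := by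
    refine maxOver_le (Psi_nonneg z Fs O) ?_
    intro x hx
    have : x ∈ Finset.univ.biUnion O := hcover ▸ hx
    obtain ⟨i, _, hxi⟩ := Finset.mem_biUnion.mp this
    obtain ⟨f, hf, hfe⟩ := exists_minOver hFsne
      (fun f => maxOver (O i) fun x => dist x f ^ z)
    calc (minOver Fs fun f => dist f x ^ z) ≤ dist f x ^ z := minOver_le _ _ hf
      _ ≤ maxOver (O i) fun y => dist y f ^ z := by
          rw [dist_comm]; exact le_maxOver (O i) (fun y => dist y f ^ z) hxi
      _ = minOver Fs fun f => maxOver (O i) fun x => dist x f ^ z := hfe.symm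
      _ ≤ Psi z Fs O := le_ciSup (hbddrange Fs) i
  have hOPT_le : OPTCost z k m L C ≤ PsiStar z L O := by
    have hZcsub : C \ C' ⊆ C := Finset.sdiff_subset
    have hZccard : (C \ C').card ≤ m := by
      rw [Finset.card_sdiff_of_subset hC'sub]
      omega
    have hmem : ksCost z Fs C' ∈ ((fun p : Finset X × Finset X =>
        ksCost z p.1 (C \ p.2)) ''
        {p : Finset X × Finset X | p.1 ⊆ L ∧ p.1.card = k ∧ p.2 ⊆ C ∧ p.2.card ≤ m}) := by
      refine ⟨(Fs, C \ C'), ⟨hFs.1, hFs.2, hZcsub, hZccard⟩, ?_⟩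
      simp only
      rw [Finset.sdiff_sdiff_self_left, Finset.inter_eq_right.mpr hC'sub]
    have hfin : ((fun p : Finset X × Finset X => ksCost z p.1 (C \ p.2)) ''
        {p : Finset X × Finset X | p.1 ⊆ L ∧ p.1.card = k ∧ p.2 ⊆ C ∧ p.2.card ≤ m}).Finite := by
      refine Set.Finite.image _ (Set.Finite.subset
        ((L.powerset.finite_toSet).prod (C.powerset.finite_toSet)) ?_)
      rintro ⟨F, W⟩ h
      exact ⟨by simpa [Finset.mem_powerset] using h.1,
        by simpa [Finset.mem_powerset] using h.2.2.1⟩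
    calc OPTCost z k m L C ≤ ksCost z Fs C' := csInf_le hfin.bddBelow hmem
      _ ≤ Psi z Fs O := hcost_le_Psi
      _ = PsiStar z L O := hPsiStar_eq.symm
  have hone_le : (1 : ℝ) ≤ 2 ^ z := by
    calc (1 : ℝ) = 1 ^ z := (Real.one_rpow z).symm
      _ ≤ 2 ^ z := Real.rpow_le_rpow (by norm_num) (by norm_num) hz.le
  -- key construction
  have key : ∀ i : Fin k, ∃ p : X, p ∈ S ∪ Z ∧
      ∀ x ∈ O i, dist x p ^ z ≤ 2 ^ z * PsiStar z L O := by
    intro i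
    rcases (O i).eq_empty_or_nonempty with hOi | hOi
    · exact ⟨hS.choose, Finset.mem_union_left _ hS.choose_spec, by simp [hOi]⟩
    · obtain ⟨fi, hfi, hfie⟩ := exists_minOver hFsne
        (fun f => maxOver (O i) fun x => dist x f ^ z)
      have hfi_bound : ∀ x ∈ O i, dist x fi ^ z ≤ PsiStar z L O := by
        intro x hx
        calc dist x fi ^ z ≤ maxOver (O i) fun y => dist y fi ^ z :=
              le_maxOver (O i) (fun y => dist y fi ^ z) hx
          _ = minOver Fs fun f => maxOver (O i) fun x => dist x f ^ z := hfie.symm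
          _ ≤ Psi z Fs O := le_ciSup (hbddrange Fs) i
          _ = PsiStar z L O := hPsiStar_eq.symm
      have hfiC : fi ∈ C := hLC ▸ hFs.1 hfi
      by_cases hfZ : fi ∈ Z
      · refine ⟨fi, Finset.mem_union_right _ hfZ, fun x hx => ?_⟩
        calc dist x fi ^ z ≤ PsiStar z L O := hfi_bound x hx
          _ = 1 * PsiStar z L O := (one_mul _).symm
          _ ≤ 2 ^ z * PsiStar z L O :=
              mul_le_mul_of_nonneg_right hone_le hPsiStar_nonneg
      · have hfiCZ : fi ∈ C \ Z := Finset.mem_sdiff.mpr ⟨hfiC, hfZ⟩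
        have hmin_le : (minOver S fun f => dist f fi ^ z) ≤ PsiStar z L O := by
          calc (minOver S fun f => dist f fi ^ z)
              ≤ ksCost z S (C \ Z) :=
                le_maxOver (C \ Z) (fun x => minOver S fun f => dist f x ^ z) hfiCZ
            _ ≤ OPTCost z k m L C := hcost
            _ ≤ PsiStar z L O := hOPT_le
        obtain ⟨s, hsS, hse⟩ := exists_minOver hS (fun f => dist f fi ^ z)
        have hs_bound : dist s fi ^ z ≤ PsiStar z L O := by rw [← hse]; exact hmin_le
        refine ⟨s, Finset.mem_union_left _ hsS, fun x hx => ?_⟩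
        have htri : dist x s ≤ dist x fi + dist fi s := dist_triangle x fi s
        have h1 : dist x s ^ z ≤ (dist x fi + dist fi s) ^ z :=
          Real.rpow_le_rpow dist_nonneg htri hz.le
        have h2 : dist fi s ^ z ≤ PsiStar z L O := by
          rw [dist_comm]; exact hs_bound
        exact h1.trans (sum_rpow_le_aux hz dist_nonneg dist_nonneg
          (hfi_bound x hx) h2)
  choose g hgmem hgbound using key
  refine ⟨Finset.image g Finset.univ, ?_, ?_, ?_, ?_⟩
  · intro x hx
    obtain ⟨i, _, rfl⟩ := Finset.mem_image.mp hx
    exact hgmem i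
  · calc (Finset.image g Finset.univ).card ≤ Finset.univ.card := Finset.card_image_le
      _ = k := by simp
  · exact Finset.Nonempty.image Finset.univ_nonempty g
  · refine ciSup_le fun i => ?_
    have hgi : g i ∈ Finset.image g Finset.univ :=
      Finset.mem_image.mpr ⟨i, Finset.mem_univ i, rfl⟩
    calc (minOver (Finset.image g Finset.univ) fun f => maxOver (O i) fun x => dist x f ^ z)
        ≤ maxOver (O i) fun x => dist x (g i) ^ z := minOver_le _ _ hgi
      _ ≤ 2 ^ z * PsiStar z L O := maxOver_le
          (mul_nonneg (Real.rpow_nonneg (by norm_num) z) hPsiStar_nonneg)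
          (hgbound i)

end
end

section
/- Suppose S ⊆ L is nonempty, Z ⊆ C satisfies |Z| ≤ m, and cost(S, C \ Z) ≤ OPT. For each x ∈ Z let g(x) ∈ L be a facility minimizing d(x, ·) over L, and let G = { g(x) : x ∈ Z }. Then for every subset C' ⊆ C with |C'| ≥ |C| − m, every partition O = (O_1, …, O_k) of C' into k (possibly empty) parts, and every client x ∈ C', the closest point of S ∪ G to x satisfies min_{h ∈ S ∪ G} d(x, h)^z ≤ Ψ*(O). -/
open Finset

noncomputable section

/-!
Fix `F ⊆ L` with `|F| = k`. A client `x ∈ Z` is served by `g x`, which is at least as close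
to `x` as every point of `F`, in particular as the centre serving the part of `O` containing
`x`. A client `x ∉ Z` is served by `S` within
`cost(S, C \ Z) ≤ OPT ≤ cost(F, C') ≤ Ψ(F, O)`, where the middle inequality holds because
`C \ C'` is an admissible outlier set.
-/

section MinMax

variable {X : Type*} {s t : Finset X} {f : X → ℝ} {a : X} {b : ℝ}

lemma minOver_le_s11 (ha : a ∈ s) : minOver s f ≤ f a :=
  csInf_le (s.finite_toSet.image f).bddBelow ⟨a, ha, rfl⟩

lemma le_minOver (hs : s.Nonempty) (h : ∀ a ∈ s, b ≤ f a) : b ≤ minOver s f :=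
  le_csInf (hs.to_set.image f) (by rintro _ ⟨a, ha, rfl⟩; exact h a ha)

lemma le_maxOver_s11 (ha : a ∈ s) : f a ≤ maxOver s f :=
  le_csSup (s.finite_toSet.image f).bddAbove ⟨a, ha, rfl⟩

lemma maxOver_le_s11 (hs : s.Nonempty) (h : ∀ a ∈ s, f a ≤ b) : maxOver s f ≤ b :=
  csSup_le (hs.to_set.image f) (by rintro _ ⟨a, ha, rfl⟩; exact h a ha)

lemma minOver_anti (hst : s ⊆ t) (hs : s.Nonempty) : minOver t f ≤ minOver s f :=
  csInf_le_csInf (t.finite_toSet.image f).bddBelow (hs.to_set.image f)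
    (Set.image_mono (mod_cast hst))

end MinMax

section Costs

variable {X : Type*} [MetricSpace X] {z : ℝ}

lemma minOver_dist_le_ksCost {F C' : Finset X} {x : X} (hx : x ∈ C') :
    minOver F (fun f => dist x f ^ z) ≤ ksCost z F C' := by
  simpa only [ksCost, dist_comm] using
    le_maxOver_s11 (f := fun y => minOver F fun f => dist f y ^ z) hx

lemma minOver_dist_le_Psi {k : ℕ} {F : Finset X} (hF : F.Nonempty) (O : Fin k → Finset X)
    {i : Fin k} {y : X} (hy : y ∈ O i) :
    minOver F (fun f => dist y f ^ z) ≤ Psi z F O := by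
  calc minOver F (fun f => dist y f ^ z)
      ≤ minOver F fun f => maxOver (O i) fun w => dist w f ^ z :=
        le_minOver hF fun f hf => (minOver_le_s11 hf).trans (le_maxOver_s11 (f := (dist · f ^ z)) hy)
    _ ≤ Psi z F O :=
        le_ciSup (f := fun i => minOver F fun f => maxOver (O i) fun w => dist w f ^ z)
          (Set.finite_range _).bddAbove i

lemma ksCost_le_Psi [DecidableEq X] {k : ℕ} {F C' : Finset X} (hF : F.Nonempty)
    (hC' : C'.Nonempty) {O : Fin k → Finset X} (hcover : Finset.univ.biUnion O = C') :
    ksCost z F C' ≤ Psi z F O := by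
  refine maxOver_le_s11 hC' fun y hy => ?_
  obtain ⟨i, -, hyO⟩ := Finset.mem_biUnion.mp (hcover ▸ hy)
  simpa only [dist_comm] using minOver_dist_le_Psi hF O hyO

lemma OPTCost_le_ksCost [DecidableEq X] {k m : ℕ} {L C F C' : Finset X}
    (hFL : F ⊆ L) (hFk : F.card = k) (hC'C : C' ⊆ C) (hC'card : C.card - m ≤ C'.card) :
    OPTCost z k m L C ≤ ksCost z F C' := by
  have hbdd : BddBelow ((fun p : Finset X × Finset X => ksCost z p.1 (C \ p.2)) ''
      {p | p.1 ⊆ L ∧ p.1.card = k ∧ p.2 ⊆ C ∧ p.2.card ≤ m}) := by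
    refine (((L.powerset ×ˢ C.powerset).finite_toSet.subset ?_).image _).bddBelow
    rintro p ⟨hpL, -, hpC, -⟩
    simpa using And.intro hpL hpC
  have houtliers : (C \ C').card ≤ m := by
    rw [Finset.card_sdiff_of_subset hC'C]
    omega
  have hC' : C \ (C \ C') = C' := by
    rw [Finset.sdiff_sdiff_self_left, Finset.inter_eq_right.mpr hC'C]
  exact hC' ▸ csInf_le hbdd ⟨(F, C \ C'), ⟨hFL, hFk, Finset.sdiff_subset, houtliers⟩, rfl⟩

lemma le_PsiStar {k : ℕ} {L : Finset X} (hL : k ≤ L.card) {O : Fin k → Finset X}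
    (h : ∀ F ⊆ L, F.card = k → b ≤ Psi z F O) : b ≤ PsiStar z L O := by
  obtain ⟨F₀, hF₀L, hF₀k⟩ := Finset.exists_subset_card_eq hL
  refine le_csInf ⟨_, F₀, ⟨hF₀L, hF₀k⟩, rfl⟩ ?_
  rintro _ ⟨F, ⟨hFL, hFk⟩, rfl⟩
  exact h F hFL hFk

end Costs

theorem closest_in_S_union_G_le_psiStar_general {X : Type*} [MetricSpace X] [DecidableEq X]
    (k m : ℕ) (hk : 1 ≤ k) (z : ℝ) (hz : 0 < z)
    (C L : Finset X) (hL : k ≤ L.card)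
    (S : Finset X) (hS : S.Nonempty)
    (Z : Finset X)
    (hcost : ksCost z S (C \ Z) ≤ OPTCost z k m L C)
    (g : X → X)
    (hgmin : ∀ x ∈ Z, ∀ f ∈ L, dist x (g x) ≤ dist x f)
    (C' : Finset X) (hC'sub : C' ⊆ C) (hC'card : C.card - m ≤ C'.card)
    (O : Fin k → Finset X)
    (hcover : Finset.univ.biUnion O = C') :
    ∀ x ∈ C', minOver (S ∪ Z.image g) (fun h => dist x h ^ z) ≤ PsiStar z L O := by
  intro x hx
  refine le_PsiStar hL fun F hFL hFk => ?_
  have hF : F.Nonempty := Finset.card_pos.mp (by omega)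
  obtain ⟨i, -, hxO⟩ := Finset.mem_biUnion.mp (hcover ▸ hx)
  by_cases hxZ : x ∈ Z
  · calc minOver (S ∪ Z.image g) (fun h => dist x h ^ z)
        ≤ dist x (g x) ^ z :=
          minOver_le_s11 (Finset.mem_union_right _ (Finset.mem_image_of_mem g hxZ))
      _ ≤ minOver F (fun f => dist x f ^ z) := le_minOver hF fun f hf =>
          Real.rpow_le_rpow dist_nonneg (hgmin x hxZ f (hFL hf)) hz.le
      _ ≤ Psi z F O := minOver_dist_le_Psi hF O hxO
  · calc minOver (S ∪ Z.image g) (fun h => dist x h ^ z)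
        ≤ minOver S (fun h => dist x h ^ z) := minOver_anti Finset.subset_union_left hS
      _ ≤ ksCost z S (C \ Z) := minOver_dist_le_ksCost (Finset.mem_sdiff.mpr ⟨hC'sub hx, hxZ⟩)
      _ ≤ OPTCost z k m L C := hcost
      _ ≤ ksCost z F C' := OPTCost_le_ksCost hFL hFk hC'sub hC'card
      _ ≤ Psi z F O := ksCost_le_Psi hF ⟨x, hx⟩ hcover

theorem closest_in_S_union_G_le_psiStar {X : Type*} [MetricSpace X] [DecidableEq X]
    (k m : ℕ) (hk : 1 ≤ k) (z : ℝ) (hz : 0 < z)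
    (C L : Finset X) (hC : C.Nonempty) (hL : k ≤ L.card)
    (S : Finset X) (hSL : S ⊆ L) (hS : S.Nonempty)
    (Z : Finset X) (hZC : Z ⊆ C) (hZm : Z.card ≤ m)
    (hcost : ksCost z S (C \ Z) ≤ OPTCost z k m L C)
    (g : X → X) (hgL : ∀ x ∈ Z, g x ∈ L)
    (hgmin : ∀ x ∈ Z, ∀ f ∈ L, dist x (g x) ≤ dist x f)
    (C' : Finset X) (hC'sub : C' ⊆ C) (hC'card : C.card - m ≤ C'.card)
    (O : Fin k → Finset X)
    (hdisj : ∀ i j, i ≠ j → Disjoint (O i) (O j))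
    (hcover : Finset.univ.biUnion O = C') :
    ∀ x ∈ C', minOver (S ∪ Z.image g) (fun h => dist x h ^ z) ≤ PsiStar z L O :=
  closest_in_S_union_G_le_psiStar_general k m hk z hz C L hL S hS Z hcost g hgmin C' hC'sub hC'card
    O hcover

end
end
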